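/- For f_TV(u) = |u-1|/2, the function h(t) = (1/π)∫_0^π f_TV(1/(cosh t + sinh t·cos θ)) dθ satisfies lim_{t→0+} h(2t)/h(t) = 2. -/

import Mathlib

noncomputable def hTV (t : ℝ) : ℝ :=
  (1 / Real.pi) * ∫ θ in (0 : ℝ)..Real.pi,
    |1 / (Real.cosh t + Real.sinh t * Real.cos θ) - 1| / 2

/-!
With `s = t / 2`, the denominator `cosh t + sinh t * cos θ` is the squared modulus of
`cosh s + sinh s * exp (θ * I)`, and `(1 / (cosh t + sinh t * cos θ) - 1) / 2` is the derivative
in `θ` of minus the argument of that number. The integrand changes sign exactly once on `[0, π]`,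
at `cos θ = -tanh s`, where the argument equals `arctan (sinh s)`; hence
`hTV t = 2 / π * arctan (sinh (t / 2))` for `t > 0`. This vanishes at `0` with nonzero derivative
there, so `hTV (2 * t) / hTV t → 2`.
-/

open Real Filter Set Topology MeasureTheory

theorem intervalIntegral.integral_abs_eq_of_nonpos_of_nonneg {g B : ℝ → ℝ} {a b c : ℝ}
    (hac : a ≤ c) (hcb : c ≤ b) (hB : ∀ x ∈ Icc a b, HasDerivAt B (g x) x)
    (hg : IntervalIntegrable g volume a b)
    (hneg : ∀ x ∈ Icc a c, g x ≤ 0) (hpos : ∀ x ∈ Icc c b, 0 ≤ g x) :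
    ∫ x in a..b, |g x| = B a + B b - 2 * B c := by
  have hsub₁ : Icc a c ⊆ Icc a b := Icc_subset_Icc_right hcb
  have hsub₂ : Icc c b ⊆ Icc a b := Icc_subset_Icc_left hac
  have hg₁ : IntervalIntegrable g volume a c :=
    hg.mono_set (by rwa [uIcc_of_le hac, uIcc_of_le (hac.trans hcb)])
  have hg₂ : IntervalIntegrable g volume c b :=
    hg.mono_set (by rwa [uIcc_of_le hcb, uIcc_of_le (hac.trans hcb)])
  have h₁ : ∫ x in a..c, |g x| = B a - B c := by
    rw [integral_congr (g := fun x => -g x)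
        fun x hx => abs_of_nonpos (hneg x (by rwa [uIcc_of_le hac] at hx)),
      integral_neg, integral_eq_sub_of_hasDerivAt
        (fun x hx => hB x (hsub₁ (by rwa [uIcc_of_le hac] at hx))) hg₁]
    ring
  have h₂ : ∫ x in c..b, |g x| = B b - B c := by
    rw [integral_congr (g := g)
        fun x hx => abs_of_nonneg (hpos x (by rwa [uIcc_of_le hcb] at hx)),
      integral_eq_sub_of_hasDerivAt
        (fun x hx => hB x (hsub₂ (by rwa [uIcc_of_le hcb] at hx))) hg₂]
  rw [← integral_add_adjacent_intervals hg₁.abs hg₂.abs, h₁, h₂]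
  ring

theorem Real.abs_sinh_lt_cosh (x : ℝ) : |sinh x| < cosh x := by
  rw [abs_sinh, ← cosh_abs]
  exact sinh_lt_cosh _

theorem Real.cosh_add_sinh_mul_cos_pos (x θ : ℝ) : 0 < cosh x + sinh x * cos θ := by
  have : |sinh x * cos θ| ≤ |sinh x| := by
    rw [abs_mul]; exact mul_le_of_le_one_right (abs_nonneg _) (abs_cos_le_one θ)
  linarith [neg_abs_le (sinh x * cos θ), abs_sinh_lt_cosh x]

theorem Real.one_div_cosh_two_mul_add_sinh_two_mul_mul_cos_sub_one_div_two (s θ : ℝ) :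
    (1 / (cosh (2 * s) + sinh (2 * s) * cos θ) - 1) / 2
      = -(sinh s * (sinh s + cosh s * cos θ)) / (cosh (2 * s) + sinh (2 * s) * cos θ) := by
  have hD := (cosh_add_sinh_mul_cos_pos (2 * s) θ).ne'
  field_simp
  rw [cosh_two_mul, sinh_two_mul]
  linear_combination (-1) * cosh_sq_sub_sinh_sq s

noncomputable def hTVPrimitive (s θ : ℝ) : ℝ :=
  -arctan (sinh s * sin θ / (cosh s + sinh s * cos θ))

theorem hasDerivAt_hTVPrimitive (s θ : ℝ) :
    HasDerivAt (hTVPrimitive s) ((1 / (cosh (2 * s) + sinh (2 * s) * cos θ) - 1) / 2) θ := by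
  have hv := (cosh_add_sinh_mul_cos_pos s θ).ne'
  have hD := (cosh_add_sinh_mul_cos_pos (2 * s) θ).ne'
  have hq : HasDerivAt (fun θ => sinh s * sin θ / (cosh s + sinh s * cos θ))
      ((sinh s * cos θ * (cosh s + sinh s * cos θ) - sinh s * sin θ * (sinh s * -sin θ))
        / (cosh s + sinh s * cos θ) ^ 2) θ :=
    ((hasDerivAt_sin θ).const_mul _).div (((hasDerivAt_cos θ).const_mul _).const_add _) hv
  have hmod : 1 + (sinh s * sin θ / (cosh s + sinh s * cos θ)) ^ 2
      = (cosh (2 * s) + sinh (2 * s) * cos θ) / (cosh s + sinh s * cos θ) ^ 2 := by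
    rw [cosh_two_mul, sinh_two_mul]
    field_simp
    linear_combination sinh s ^ 2 * sin_sq_add_cos_sq θ
  have hnum : sinh s * cos θ * (cosh s + sinh s * cos θ) - sinh s * sin θ * (sinh s * -sin θ)
      = sinh s * (sinh s + cosh s * cos θ) := by
    linear_combination sinh s ^ 2 * sin_sq_add_cos_sq θ
  refine ((hasDerivAt_arctan _).comp θ hq).neg.congr_deriv ?_
  rw [hmod, hnum, one_div_cosh_two_mul_add_sinh_two_mul_mul_cos_sub_one_div_two]
  generalize cosh s + sinh s * cos θ = v at hv ⊢
  field_simp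

theorem hTVPrimitive_zero (s : ℝ) : hTVPrimitive s 0 = 0 := by simp [hTVPrimitive]

theorem hTVPrimitive_pi (s : ℝ) : hTVPrimitive s π = 0 := by simp [hTVPrimitive]

theorem Real.cos_arccos_neg_sinh_div_cosh (s : ℝ) :
    cos (arccos (-(sinh s / cosh s))) = -(sinh s / cosh s) := by
  have hle : |sinh s / cosh s| ≤ 1 := by
    rw [abs_div, abs_of_pos (cosh_pos s), div_le_one (cosh_pos s)]
    exact (abs_sinh_lt_cosh s).le
  exact cos_arccos (by linarith [le_abs_self (sinh s / cosh s)])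
    (by linarith [neg_abs_le (sinh s / cosh s)])

theorem hTVPrimitive_arccos (s : ℝ) :
    hTVPrimitive s (arccos (-(sinh s / cosh s))) = -arctan (sinh s) := by
  have hγ := cosh_pos s
  have hsin : sin (arccos (-(sinh s / cosh s))) = 1 / cosh s := by
    rw [sin_arccos, show 1 - (-(sinh s / cosh s)) ^ 2 = (1 / cosh s) ^ 2 by
      field_simp; linear_combination cosh_sq_sub_sinh_sq s]
    exact sqrt_sq (by positivity)
  have hden : cosh s + sinh s * -(sinh s / cosh s) = 1 / cosh s := by
    field_simp
    linear_combination cosh_sq_sub_sinh_sq s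
  rw [hTVPrimitive, cos_arccos_neg_sinh_div_cosh, hsin, hden,
    mul_div_cancel_right₀ _ (by positivity)]

theorem hTV_eq_arctan_sinh {t : ℝ} (ht : 0 < t) : hTV t = 2 / π * arctan (sinh (t / 2)) := by
  obtain ⟨s, rfl⟩ : ∃ s, t = 2 * s := ⟨t / 2, by ring⟩
  have hσ : 0 ≤ sinh s := sinh_nonneg_iff.2 (by linarith)
  set θ₀ := arccos (-(sinh s / cosh s))
  have hθ₀ : θ₀ ∈ Icc 0 π := ⟨arccos_nonneg _, arccos_le_pi _⟩
  have hcos : sinh s + cosh s * cos θ₀ = 0 := by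
    rw [cos_arccos_neg_sinh_div_cosh]
    field_simp [(cosh_pos s).ne']
    ring
  have hneg : ∀ θ ∈ Icc 0 θ₀, (1 / (cosh (2 * s) + sinh (2 * s) * cos θ) - 1) / 2 ≤ 0 := by
    intro θ hθ
    have := cos_le_cos_of_nonneg_of_le_pi hθ.1 hθ₀.2 hθ.2
    rw [one_div_cosh_two_mul_add_sinh_two_mul_mul_cos_sub_one_div_two]
    refine div_nonpos_of_nonpos_of_nonneg (neg_nonpos.2 (mul_nonneg hσ ?_))
      (cosh_add_sinh_mul_cos_pos _ _).le
    linarith [mul_le_mul_of_nonneg_left this (cosh_pos s).le]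
  have hpos : ∀ θ ∈ Icc θ₀ π, 0 ≤ (1 / (cosh (2 * s) + sinh (2 * s) * cos θ) - 1) / 2 := by
    intro θ hθ
    have := cos_le_cos_of_nonneg_of_le_pi hθ₀.1 hθ.2 hθ.1
    rw [one_div_cosh_two_mul_add_sinh_two_mul_mul_cos_sub_one_div_two, neg_div]
    refine neg_nonneg.2 (div_nonpos_of_nonpos_of_nonneg (mul_nonpos_of_nonneg_of_nonpos hσ ?_)
      (cosh_add_sinh_mul_cos_pos _ _).le)
    linarith [mul_le_mul_of_nonneg_left this (cosh_pos s).le]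
  have hcont : Continuous fun θ => (1 / (cosh (2 * s) + sinh (2 * s) * cos θ) - 1) / 2 :=
    ((continuous_const.div (by fun_prop) fun θ => (cosh_add_sinh_mul_cos_pos _ θ).ne').sub
      continuous_const).div_const 2
  have hint := intervalIntegral.integral_abs_eq_of_nonpos_of_nonneg hθ₀.1 hθ₀.2
    (fun θ _ => hasDerivAt_hTVPrimitive s θ) (hcont.intervalIntegrable _ _) hneg hpos
  have hB : hTVPrimitive s θ₀ = -arctan (sinh s) := hTVPrimitive_arccos s
  simp only [abs_div, abs_two, hTVPrimitive_zero, hTVPrimitive_pi, hB] at hint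
  rw [hTV, hint, mul_div_cancel_left₀ s two_ne_zero]
  ring

theorem tendsto_comp_const_mul_div_self {f : ℝ → ℝ} {c : ℝ} (a : ℝ) (hf : HasDerivAt f c 0)
    (hf₀ : f 0 = 0) (hc : c ≠ 0) : Tendsto (fun t => f (a * t) / f t) (𝓝[≠] 0) (𝓝 a) := by
  have hfa : HasDerivAt (fun t => f (a * t)) (c * a) 0 :=
    hf.comp_of_eq 0 (by simpa using (hasDerivAt_id 0).const_mul a) (mul_zero a).symm
  have := (hasDerivAt_iff_tendsto_slope.1 hfa).div (hasDerivAt_iff_tendsto_slope.1 hf) hc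
  rw [mul_div_cancel_left₀ a hc] at this
  refine this.congr' (eventually_nhdsWithin_of_forall fun t ht => ?_)
  simp only [Pi.div_apply, slope_def_field, mul_zero, hf₀, sub_zero]
  exact div_div_div_cancel_right₀ ht _ _

theorem hTV_ratio_tendsto_two :
    Filter.Tendsto (fun t => hTV (2 * t) / hTV t) (nhdsWithin 0 (Set.Ioi 0)) (nhds 2) := by
  have hF : HasDerivAt (fun t => arctan (sinh (t / 2))) (1 / 2) 0 := by
    simpa using ((hasDerivAt_id 0).div_const 2).sinh.arctan
  have hlim := (tendsto_comp_const_mul_div_self 2 hF (by simp) (by norm_num)).mono_left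
    (nhdsWithin_mono 0 fun t (ht : 0 < t) => ht.ne')
  refine hlim.congr' (eventually_nhdsWithin_of_forall fun t (ht : 0 < t) => ?_)
  dsimp only
  rw [hTV_eq_arctan_sinh ht, hTV_eq_arctan_sinh (by positivity)]
  exact (mul_div_mul_left _ _ (by positivity)).symm
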